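/- arXiv:1806.09331 — 3 statements merged into one kernel-verified Lean document; each statement's English description precedes it below -/
import Mathlib

section
/- Energy identity in scattering direction coordinates: fix species masses m_1,…,m_I > 0 with total mass M := m_1+⋯+m_I, indices i,j, velocities v, v_* ∈ ℝ³ and σ ∈ S². Set u := v − v_*, V := (m_i v + m_j v_*)/(m_i+m_j), r := m_i/(m_i+m_j), v' := V + (1−r)|u|σ, v'_* := V − r|u|σ, and E := ⟨v⟩_i² + ⟨v_*⟩_j². Define s := (1 + (m_i m_j/((m_i+m_j)M))|u|²)/E, p := (r(1−s) + (1−r)s)E, q := (rs + (1−r)(1−s))E, and λ := 2√(r(1−r)(sE−1)((1−s)E−1)). Then s ∈ [0,1], sE ≥ 1, (1−s)E = 1 + ((m_i+m_j)/M)|V|² ≥ 1, p + q = E, and, whenever V ≠ 0, ⟨v'⟩_i² = p + λ σ·(V/|V|) and ⟨v'_*⟩_j² = q − λ σ·(V/|V|); in particular ⟨v'⟩_i² + ⟨v'_*⟩_j² = ⟨v⟩_i² + ⟨v_*⟩_j². -/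
/-!
Write `μ = m_i m_j / (m_i + m_j)` for the reduced mass. The centre-of-mass splitting
`m_i |v|² + m_j |v_*|² = (m_i + m_j) |V|² + μ |u|²` divides the energy `E` into the relative part
`s E = 1 + μ |u|² / M` and the centre-of-mass part `(1 - s) E = 1 + (m_i + m_j) |V|² / M`, both at
least `1`. Expanding `|V + c σ|²` for a unit vector `σ`, each post-collision energy is the
`r`-weighted mixture of these two parts plus a cross term `± 2 μ |u| σ·V / M`, and `λ` is exactly
that cross term's coefficient `2 μ |u| |V| / M`. The cross terms cancel in the sum, which gives
conservation of energy.
-/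

open MeasureTheory

noncomputable section

local notation "E3" => EuclideanSpace ℝ (Fin 3)

open scoped RealInnerProductSpace

section InnerProductSpace

variable {F : Type*} [NormedAddCommGroup F] [InnerProductSpace ℝ F]

theorem norm_add_smul_sq_of_norm_eq_one {σ : F} (hσ : ‖σ‖ = 1) (V : F) (c : ℝ) :
    ‖V + c • σ‖ ^ 2 = ‖V‖ ^ 2 + 2 * c * ⟪σ, V⟫ + c ^ 2 := by
  rw [norm_add_sq_real, real_inner_smul_right, norm_smul, mul_pow, hσ, Real.norm_eq_abs, sq_abs,
    real_inner_comm]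
  ring

theorem norm_sub_smul_sq_of_norm_eq_one {σ : F} (hσ : ‖σ‖ = 1) (V : F) (c : ℝ) :
    ‖V - c • σ‖ ^ 2 = ‖V‖ ^ 2 - 2 * c * ⟪σ, V⟫ + c ^ 2 := by
  rw [sub_eq_add_neg, ← neg_smul, norm_add_smul_sq_of_norm_eq_one hσ]
  ring

theorem norm_mul_inner_inv_norm_smul (σ V : F) : ‖V‖ * ⟪σ, ‖V‖⁻¹ • V⟫ = ⟪σ, V⟫ := by
  rcases eq_or_ne V 0 with rfl | hV
  · simp
  · rw [real_inner_smul_right, ← mul_assoc, mul_inv_cancel₀ (norm_ne_zero_iff.mpr hV), one_mul]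

theorem mul_norm_sq_add_mul_norm_sq_eq_centerOfMass {a b : ℝ} (hab : a + b ≠ 0) (v w : F) :
    a * ‖v‖ ^ 2 + b * ‖w‖ ^ 2
      = (a + b) * ‖(a + b)⁻¹ • (a • v + b • w)‖ ^ 2 + a * b / (a + b) * ‖v - w‖ ^ 2 := by
  rw [norm_smul, mul_pow, norm_add_sq_real, norm_sub_sq_real, real_inner_smul_left,
    real_inner_smul_right, norm_smul, norm_smul, Real.norm_eq_abs, Real.norm_eq_abs,
    Real.norm_eq_abs, mul_pow, mul_pow, sq_abs, sq_abs, sq_abs]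
  field_simp
  ring

variable {a b M : ℝ} {σ : F}

theorem one_add_div_mul_norm_sq_add_eq_centerOfMass (hab : a + b ≠ 0) (v w : F) :
    (1 + a / M * ‖v‖ ^ 2) + (1 + b / M * ‖w‖ ^ 2)
      = (1 + a * b / ((a + b) * M) * ‖v - w‖ ^ 2)
        + (1 + (a + b) / M * ‖(a + b)⁻¹ • (a • v + b • w)‖ ^ 2) := by
  rw [div_mul_eq_div_div]
  linear_combination mul_norm_sq_add_mul_norm_sq_eq_centerOfMass hab v w / M

theorem one_add_mul_norm_sq_post_collision_fst (hab : a + b ≠ 0) (hM : M ≠ 0) (hσ : ‖σ‖ = 1)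
    (V : F) (c : ℝ) :
    1 + a / M * ‖V + ((1 - a / (a + b)) * c) • σ‖ ^ 2
      = a / (a + b) * (1 + (a + b) / M * ‖V‖ ^ 2)
        + (1 - a / (a + b)) * (1 + a * b / ((a + b) * M) * c ^ 2)
        + 2 * (a * b / ((a + b) * M)) * c * ⟪σ, V⟫ := by
  rw [norm_add_smul_sq_of_norm_eq_one hσ]
  field_simp
  ring

theorem one_add_mul_norm_sq_post_collision_snd (hab : a + b ≠ 0) (hM : M ≠ 0) (hσ : ‖σ‖ = 1)
    (V : F) (c : ℝ) :
    1 + b / M * ‖V - (a / (a + b) * c) • σ‖ ^ 2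
      = a / (a + b) * (1 + a * b / ((a + b) * M) * c ^ 2)
        + (1 - a / (a + b)) * (1 + (a + b) / M * ‖V‖ ^ 2)
        - 2 * (a * b / ((a + b) * M)) * c * ⟪σ, V⟫ := by
  rw [norm_sub_smul_sq_of_norm_eq_one hσ]
  field_simp
  ring

end InnerProductSpace

theorem sqrt_collision_weight {a b M x y : ℝ} (ha : 0 < a) (hb : 0 < b) (hM : 0 < M)
    (hx : 0 ≤ x) (hy : 0 ≤ y) :
    √(a / (a + b) * (1 - a / (a + b)) * (a * b / ((a + b) * M) * x ^ 2)
        * ((a + b) / M * y ^ 2))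
      = a * b / ((a + b) * M) * x * y := by
  have hab : a + b ≠ 0 := by positivity
  rw [← Real.sqrt_sq (by positivity : 0 ≤ a * b / ((a + b) * M) * x * y)]
  congr 1
  field_simp
  ring

theorem energy_identity_scattering_coordinates_general
    {I : ℕ} (m : Fin I → ℝ) (hm : ∀ k, 0 < m k) (i j : Fin I)
    (v vs σ : E3) (hσ : ‖σ‖ = 1) :
    let M : ℝ := ∑ k, m k
    let u : E3 := v - vs
    let V : E3 := (m i + m j)⁻¹ • (m i • v + m j • vs)
    let r : ℝ := m i / (m i + m j)
    let v' : E3 := V + ((1 - r) * ‖u‖) • σ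
    let vs' : E3 := V - (r * ‖u‖) • σ
    let E : ℝ := (1 + (m i / M) * ‖v‖ ^ 2) + (1 + (m j / M) * ‖vs‖ ^ 2)
    let s : ℝ := (1 + (m i * m j / ((m i + m j) * M)) * ‖u‖ ^ 2) / E
    let p : ℝ := (r * (1 - s) + (1 - r) * s) * E
    let q : ℝ := (r * s + (1 - r) * (1 - s)) * E
    let lam : ℝ := 2 * Real.sqrt (r * (1 - r) * (s * E - 1) * ((1 - s) * E - 1))
    (0 ≤ s ∧ s ≤ 1) ∧
    1 ≤ s * E ∧
    ((1 - s) * E = 1 + ((m i + m j) / M) * ‖V‖ ^ 2 ∧ 1 ≤ (1 - s) * E) ∧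
    p + q = E ∧
    (V ≠ 0 →
      (1 + (m i / M) * ‖v'‖ ^ 2 = p + lam * (inner ℝ σ (‖V‖⁻¹ • V) : ℝ) ∧
       1 + (m j / M) * ‖vs'‖ ^ 2 = q - lam * (inner ℝ σ (‖V‖⁻¹ • V) : ℝ))) ∧
    (1 + (m i / M) * ‖v'‖ ^ 2) + (1 + (m j / M) * ‖vs'‖ ^ 2)
      = (1 + (m i / M) * ‖v‖ ^ 2) + (1 + (m j / M) * ‖vs‖ ^ 2) := by
  intro M u V r v' vs' E s p q lam
  have hmi := hm i
  have hmj := hm j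
  have hM : 0 < M := Finset.sum_pos (fun k _ => hm k) ⟨i, Finset.mem_univ i⟩
  have hE : 0 < E := by positivity
  have hsE : s * E = 1 + m i * m j / ((m i + m j) * M) * ‖u‖ ^ 2 := div_mul_cancel₀ _ hE.ne'
  have hE_split : E = _ + (1 + (m i + m j) / M * ‖V‖ ^ 2) :=
    one_add_div_mul_norm_sq_add_eq_centerOfMass (by positivity) v vs
  have h1sE : (1 - s) * E = 1 + (m i + m j) / M * ‖V‖ ^ 2 := by
    linear_combination hE_split - hsE
  have hsE1 : 1 ≤ s * E := by rw [hsE]; exact le_add_of_nonneg_right (by positivity)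
  have h1sE1 : 1 ≤ (1 - s) * E := by rw [h1sE]; exact le_add_of_nonneg_right (by positivity)
  have hlam : lam * ⟪σ, ‖V‖⁻¹ • V⟫ = 2 * (m i * m j / ((m i + m j) * M)) * ‖u‖ * ⟪σ, V⟫ := by
    have hsqrt : √(r * (1 - r) * (s * E - 1) * ((1 - s) * E - 1))
        = m i * m j / ((m i + m j) * M) * ‖u‖ * ‖V‖ := by
      rw [hsE, h1sE, add_sub_cancel_left, add_sub_cancel_left]
      exact sqrt_collision_weight hmi hmj hM (norm_nonneg u) (norm_nonneg V)
    simp only [lam, hsqrt]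
    rw [← norm_mul_inner_inv_norm_smul σ V]
    ring
  have hv' : 1 + m i / M * ‖v'‖ ^ 2 = _ :=
    one_add_mul_norm_sq_post_collision_fst (by positivity) hM.ne' hσ V ‖u‖
  have hvs' : 1 + m j / M * ‖vs'‖ ^ 2 = _ :=
    one_add_mul_norm_sq_post_collision_snd (by positivity) hM.ne' hσ V ‖u‖
  refine ⟨⟨by positivity, ?_⟩, hsE1, ⟨h1sE, h1sE1⟩, by ring, fun _ => ⟨?_, ?_⟩, ?_⟩
  · linarith [pos_of_mul_pos_left (one_pos.trans_le h1sE1) hE.le]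
  · rw [hv', hlam]; linear_combination (-r) * h1sE - (1 - r) * hsE
  · rw [hvs', hlam]; linear_combination (-r) * hsE - (1 - r) * h1sE
  · rw [hv', hvs']; linear_combination (-1 : ℝ) * hsE - h1sE

/-- Energy identity in scattering direction coordinates for the `(i,j)`-pair of
colliding particles of a mixture of `I` species. -/
theorem energy_identity_scattering_coordinates
    {I : ℕ} (hI : 0 < I) (m : Fin I → ℝ) (hm : ∀ k, 0 < m k) (i j : Fin I)
    (v vs σ : E3) (hσ : ‖σ‖ = 1) :
    let M : ℝ := ∑ k, m k
    let u : E3 := v - vs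
    let V : E3 := (m i + m j)⁻¹ • (m i • v + m j • vs)
    let r : ℝ := m i / (m i + m j)
    let v' : E3 := V + ((1 - r) * ‖u‖) • σ
    let vs' : E3 := V - (r * ‖u‖) • σ
    let E : ℝ := (1 + (m i / M) * ‖v‖ ^ 2) + (1 + (m j / M) * ‖vs‖ ^ 2)
    let s : ℝ := (1 + (m i * m j / ((m i + m j) * M)) * ‖u‖ ^ 2) / E
    let p : ℝ := (r * (1 - s) + (1 - r) * s) * E
    let q : ℝ := (r * s + (1 - r) * (1 - s)) * E
    let lam : ℝ := 2 * Real.sqrt (r * (1 - r) * (s * E - 1) * ((1 - s) * E - 1))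
    (0 ≤ s ∧ s ≤ 1) ∧
    1 ≤ s * E ∧
    ((1 - s) * E = 1 + ((m i + m j) / M) * ‖V‖ ^ 2 ∧ 1 ≤ (1 - s) * E) ∧
    p + q = E ∧
    (V ≠ 0 →
      (1 + (m i / M) * ‖v'‖ ^ 2 = p + lam * (inner ℝ σ (‖V‖⁻¹ • V) : ℝ) ∧
       1 + (m j / M) * ‖vs'‖ ^ 2 = q - lam * (inner ℝ σ (‖V‖⁻¹ • V) : ℝ))) ∧
    (1 + (m i / M) * ‖v'‖ ^ 2) + (1 + (m j / M) * ‖vs'‖ ^ 2)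
      = (1 + (m i / M) * ‖v‖ ^ 2) + (1 + (m j / M) * ‖vs‖ ^ 2) :=
  energy_identity_scattering_coordinates_general m hm i j v vs σ hσ
end
end

section
/- Generation estimate for the Bernoulli-type moment differential inequality: let a, b, c > 0 and let y : [0,∞) → [0,∞) be continuous, differentiable on (0,∞), and satisfy y'(t) ≤ −a·y(t)^{1+c} + b·y(t) for all t > 0. Then (1) for every t > 0, y(t) ≤ ( (a/b)(1 − e^{−cbt}) )^{−1/c}; and (2) there is an explicit constant K := (a/b)^{−1/c} · max{ (cb)^{−1/c} e^{b/2}, (1 − e^{−cb})^{−1/c} } such that y(t) ≤ K · max{1, t^{−1/c}} for all t > 0. -/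
/-!
The substitution `z = y ^ (-c)` linearises the Bernoulli equation `y' = -α y ^ (1 + c) + b y`; its
solution `((α / b) (1 - e^{-cbt})) ^ (-1/c)` blows up at `t = 0`. For `α < a` it therefore starts
above the function `y`, bounded near `0`, and `y` can never reach it: at a contact point the
inequality for `y` lies strictly below the equation for the solution. Letting `α ↑ a` gives the
first bound. The solution for `α = a` decreases in `t`, which gives the second bound for `t ≥ 1`;
for `t ≤ 1` it follows from `1 - e^{-x} ≥ x e^{-x/2}`, i.e. `sinh u ≥ u`.
-/

open Real Set Filter Topology

theorem mul_exp_neg_half_le_one_sub_exp_neg {x : ℝ} (hx : 0 ≤ x) :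
    x * exp (-(x / 2)) ≤ 1 - exp (-x) := by
  have hsinh : x / 2 ≤ sinh (x / 2) := self_le_sinh_iff.2 (by linarith)
  have hfactor : 1 - exp (-x) = exp (-(x / 2)) * (2 * sinh (x / 2)) := by
    rw [sinh_eq, mul_div_cancel₀ _ two_ne_zero, mul_sub, ← exp_add, ← exp_add, neg_add_cancel,
      exp_zero]
    ring_nf
  rw [hfactor, mul_comm]
  gcongr
  linarith

theorem one_sub_exp_neg_pos {x : ℝ} (hx : 0 < x) : 0 < 1 - exp (-x) :=
  sub_pos.2 (exp_lt_one_iff.2 (neg_lt_zero.2 hx))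

noncomputable def bernoulliSolution (α b c t : ℝ) : ℝ :=
  (α / b * (1 - exp (-(c * b * t)))) ^ (-(1 / c))

section bernoulliSolution

variable {α b c : ℝ}

theorem bernoulliSolution_base_pos (hα : 0 < α) (hb : 0 < b) (hc : 0 < c) {t : ℝ} (ht : 0 < t) :
    0 < α / b * (1 - exp (-(c * b * t))) :=
  mul_pos (div_pos hα hb) (one_sub_exp_neg_pos (by positivity))

theorem bernoulliSolution_pos (hα : 0 < α) (hb : 0 < b) (hc : 0 < c) {t : ℝ} (ht : 0 < t) :
    0 < bernoulliSolution α b c t :=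
  rpow_pos_of_pos (bernoulliSolution_base_pos hα hb hc ht) _

theorem hasDerivAt_bernoulliSolution (hα : 0 < α) (hb : 0 < b) (hc : 0 < c) {t : ℝ} (ht : 0 < t) :
    HasDerivAt (bernoulliSolution α b c)
      (-α * bernoulliSolution α b c t ^ (1 + c) + b * bernoulliSolution α b c t) t := by
  set g := α / b * (1 - exp (-(c * b * t))) with hg_def
  have hg : 0 < g := bernoulliSolution_base_pos hα hb hc ht
  have hbase : HasDerivAt (fun s ↦ α / b * (1 - exp (-(c * b * s))))
      (α / b * (c * b * exp (-(c * b * t)))) t := by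
    have hlin : HasDerivAt (fun s ↦ -(c * b * s)) (-(c * b)) t := by
      simpa using ((hasDerivAt_id t).const_mul (c * b)).fun_neg
    exact (hlin.exp.const_sub 1).const_mul (α / b) |>.congr_deriv (by ring)
  have hpow : bernoulliSolution α b c t ^ (1 + c) = g ^ (-(1 / c) - 1) := by
    rw [bernoulliSolution, ← rpow_mul hg.le]
    congr 1
    field_simp
    ring
  have hsplit : bernoulliSolution α b c t = g * g ^ (-(1 / c) - 1) := by
    rw [← rpow_one_add' hg.le (by simp [hc.ne']), add_sub_cancel]
    rfl
  refine (hbase.rpow_const (Or.inl hg.ne')).congr_deriv ?_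
  rw [hpow, hsplit, hg_def]
  field_simp
  ring

theorem tendsto_bernoulliSolution_nhdsGT_zero (hα : 0 < α) (hb : 0 < b) (hc : 0 < c) :
    Tendsto (bernoulliSolution α b c) (𝓝[>] 0) atTop := by
  have hcont : Continuous fun s ↦ α / b * (1 - exp (-(c * b * s))) := by fun_prop
  have hbase : Tendsto (fun s ↦ α / b * (1 - exp (-(c * b * s)))) (𝓝[>] 0) (𝓝[>] 0) := by
    refine tendsto_nhdsWithin_of_tendsto_nhds_of_eventually_within _ ?_ ?_
    · exact (hcont.tendsto' 0 0 (by simp)).mono_left nhdsWithin_le_nhds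
    · filter_upwards [self_mem_nhdsWithin] with s hs
      exact bernoulliSolution_base_pos hα hb hc hs
  exact (tendsto_rpow_neg_nhdsGT_zero (neg_lt_zero.2 (by positivity))).comp hbase

theorem bernoulliSolution_antitoneOn (hα : 0 < α) (hb : 0 < b) (hc : 0 < c) :
    AntitoneOn (bernoulliSolution α b c) (Ioi 0) := by
  intro s hs t _ hst
  refine rpow_le_rpow_of_nonpos (bernoulliSolution_base_pos hα hb hc hs) ?_
    (neg_nonpos.2 (by positivity))
  gcongr

variable {y y' : ℝ → ℝ} {a : ℝ}

theorem le_bernoulliSolution_of_lt (hα : 0 < α) (hαa : α < a) (hb : 0 < b) (hc : 0 < c)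
    (hcont : ContinuousOn y (Ici 0)) (hderiv : ∀ t, 0 < t → HasDerivAt y (y' t) t)
    (hODI : ∀ t, 0 < t → y' t ≤ -a * y t ^ (1 + c) + b * y t) {t : ℝ} (ht : 0 < t) :
    y t ≤ bernoulliSolution α b c t := by
  obtain ⟨M, hM⟩ := isCompact_Icc.bddAbove_image (hcont.mono (Icc_subset_Ici_self : Icc 0 t ⊆ _))
  obtain ⟨t₀, hMt₀, ht₀, ht₀t⟩ :=
    (((tendsto_bernoulliSolution_nhdsGT_zero hα hb hc).eventually_ge_atTop M).and
      (Ioc_mem_nhdsGT ht)).exists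
  have hpos : ∀ x ∈ Icc t₀ t, 0 < x := fun x hx ↦ ht₀.trans_le hx.1
  refine image_le_of_deriv_right_lt_deriv_boundary' (hcont.mono fun x hx ↦ (hpos x hx).le)
    (fun x hx ↦ (hderiv x (hpos x (Ico_subset_Icc_self hx))).hasDerivWithinAt)
    ((hM ⟨t₀, ⟨ht₀.le, ht₀t⟩, rfl⟩).trans hMt₀)
    (fun x hx ↦ (hasDerivAt_bernoulliSolution hα hb hc (hpos x hx)).continuousAt.continuousWithinAt)
    (fun x hx ↦
      (hasDerivAt_bernoulliSolution hα hb hc (hpos x (Ico_subset_Icc_self hx))).hasDerivWithinAt)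
    ?_ ⟨ht₀t, le_rfl⟩
  intro x hx hyx
  have hx₀ := hpos x (Ico_subset_Icc_self hx)
  have hpow := rpow_pos_of_pos (bernoulliSolution_pos hα hb hc hx₀) (1 + c)
  calc y' x ≤ -a * y x ^ (1 + c) + b * y x := hODI x hx₀
    _ < -α * bernoulliSolution α b c x ^ (1 + c) + b * bernoulliSolution α b c x := by
      rw [hyx]
      nlinarith

theorem le_bernoulliSolution (ha : 0 < a) (hb : 0 < b) (hc : 0 < c)
    (hcont : ContinuousOn y (Ici 0)) (hderiv : ∀ t, 0 < t → HasDerivAt y (y' t) t)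
    (hODI : ∀ t, 0 < t → y' t ≤ -a * y t ^ (1 + c) + b * y t) {t : ℝ} (ht : 0 < t) :
    y t ≤ bernoulliSolution a b c t := by
  have hcontα : ContinuousAt (fun α ↦ bernoulliSolution α b c t) a :=
    ((continuousAt_id.div_const b).mul_const _).rpow_const
      (Or.inl (bernoulliSolution_base_pos ha hb hc ht).ne')
  refine ge_of_tendsto (hcontα.mono_left (nhdsWithin_le_nhds (s := Iio a))) ?_
  filter_upwards [Ioo_mem_nhdsLT ha] with α hα
  exact le_bernoulliSolution_of_lt hα.1 hα.2 hb hc hcont hderiv hODI ht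

theorem bernoulliSolution_le_of_le_one (ha : 0 < a) (hb : 0 < b) (hc : 0 < c) {t : ℝ}
    (ht : 0 < t) (ht1 : t ≤ 1) :
    bernoulliSolution a b c t
      ≤ (a / b) ^ (-(1 / c)) * ((c * b) ^ (-(1 / c)) * exp (b / 2)) * t ^ (-(1 / c)) := by
  have hcb : 0 < c * b := mul_pos hc hb
  have hlower : c * b * t * exp (-(c * b / 2)) ≤ 1 - exp (-(c * b * t)) :=
    calc c * b * t * exp (-(c * b / 2)) ≤ c * b * t * exp (-(c * b * t / 2)) :=
          mul_le_mul_of_nonneg_left (exp_le_exp.2 (by nlinarith)) (by positivity)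
      _ ≤ 1 - exp (-(c * b * t)) := mul_exp_neg_half_le_one_sub_exp_neg (by positivity)
  calc bernoulliSolution a b c t ≤ (a / b * (c * b * t * exp (-(c * b / 2)))) ^ (-(1 / c)) :=
        rpow_le_rpow_of_nonpos (by positivity) (by gcongr) (neg_nonpos.2 (by positivity))
    _ = (a / b) ^ (-(1 / c)) * ((c * b) ^ (-(1 / c)) * exp (b / 2)) * t ^ (-(1 / c)) := by
      rw [mul_rpow (by positivity) (by positivity), mul_rpow (by positivity) (by positivity),
        mul_rpow hcb.le ht.le, ← exp_mul, show -(c * b / 2) * -(1 / c) = b / 2 by field_simp]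
      ring

theorem bernoulliSolution_le_generation_bound (ha : 0 < a) (hb : 0 < b) (hc : 0 < c) {t : ℝ}
    (ht : 0 < t) :
    bernoulliSolution a b c t
      ≤ (a / b) ^ (-(1 / c))
          * max ((c * b) ^ (-(1 / c)) * exp (b / 2)) ((1 - exp (-(c * b))) ^ (-(1 / c)))
          * max 1 (t ^ (-(1 / c))) := by
  rcases le_total t 1 with ht1 | ht1
  · calc bernoulliSolution a b c t
          ≤ (a / b) ^ (-(1 / c)) * ((c * b) ^ (-(1 / c)) * exp (b / 2)) * t ^ (-(1 / c)) :=
          bernoulliSolution_le_of_le_one ha hb hc ht ht1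
      _ ≤ _ := by gcongr <;> simp
  · calc bernoulliSolution a b c t ≤ bernoulliSolution a b c 1 :=
          bernoulliSolution_antitoneOn ha hb hc (mem_Ioi.2 one_pos) (one_pos.trans_le ht1) ht1
      _ = (a / b) ^ (-(1 / c)) * (1 - exp (-(c * b))) ^ (-(1 / c)) * 1 := by
          rw [bernoulliSolution, mul_one, mul_one,
            mul_rpow (div_pos ha hb).le (one_sub_exp_neg_pos (mul_pos hc hb)).le]
      _ ≤ _ := by gcongr <;> simp

end bernoulliSolution

theorem bernoulli_odi_generation_general
    (a b c : ℝ) (ha : 0 < a) (hb : 0 < b) (hc : 0 < c)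
    (y y' : ℝ → ℝ) (hcont : ContinuousOn y (Set.Ici 0))
    (hderiv : ∀ t : ℝ, 0 < t → HasDerivAt y (y' t) t)
    (hODI : ∀ t : ℝ, 0 < t → y' t ≤ -a * y t ^ (1 + c) + b * y t) :
    (∀ t : ℝ, 0 < t →
      y t ≤ (a / b * (1 - Real.exp (-(c * b * t)))) ^ (-(1 / c))) ∧
    (∀ t : ℝ, 0 < t →
      y t ≤ (a / b) ^ (-(1 / c))
          * max ((c * b) ^ (-(1 / c)) * Real.exp (b / 2))
              ((1 - Real.exp (-(c * b))) ^ (-(1 / c)))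
          * max 1 (t ^ (-(1 / c)))) := by
  have hsol : ∀ t, 0 < t → y t ≤ bernoulliSolution a b c t :=
    fun t ht ↦ le_bernoulliSolution ha hb hc hcont hderiv hODI ht
  exact ⟨hsol, fun t ht ↦ (hsol t ht).trans (bernoulliSolution_le_generation_bound ha hb hc ht)⟩

/-- Generation estimate for the Bernoulli-type moment differential inequality. -/
theorem bernoulli_odi_generation
    (a b c : ℝ) (ha : 0 < a) (hb : 0 < b) (hc : 0 < c)
    (y y' : ℝ → ℝ) (hcont : ContinuousOn y (Set.Ici 0))
    (hynn : ∀ t : ℝ, 0 ≤ t → 0 ≤ y t)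
    (hderiv : ∀ t : ℝ, 0 < t → HasDerivAt y (y' t) t)
    (hODI : ∀ t : ℝ, 0 < t → y' t ≤ -a * y t ^ (1 + c) + b * y t) :
    (∀ t : ℝ, 0 < t →
      y t ≤ (a / b * (1 - Real.exp (-(c * b * t)))) ^ (-(1 / c))) ∧
    (∀ t : ℝ, 0 < t →
      y t ≤ (a / b) ^ (-(1 / c))
          * max ((c * b) ^ (-(1 / c)) * Real.exp (b / 2))
              ((1 - Real.exp (-(c * b))) ^ (-(1 / c)))
          * max 1 (t ^ (-(1 / c)))) :=
  bernoulli_odi_generation_general a b c ha hb hc y y' hcont hderiv hODI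
end

section
/- Polynomial inequality for moment products: let p, a, b be real numbers with 0 ≤ b and b + 1 ≤ a ≤ (p+1)/2. Then for all real x, y ≥ 0, x^a y^{p−a} + x^{p−a} y^a ≤ x^b y^{p−b} + x^{p−b} y^b. -/
/-!
Writing `a = b + d`, `p - a = b + c`, `p - b = b + c + d` with `b, c, d ≥ 0`, the right-hand side
minus the left-hand side factors as `x^b y^b (x^d - y^d)(x^c - y^c)`, which is nonnegative because
`t ↦ t^c` and `t ↦ t^d` are both monotone on `[0, ∞)`.
-/

namespace Real

theorem rpow_sub_rpow_mul_rpow_sub_rpow_nonneg {x y c d : ℝ} (hx : 0 ≤ x) (hy : 0 ≤ y)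
    (hc : 0 ≤ c) (hd : 0 ≤ d) : 0 ≤ (x ^ d - y ^ d) * (x ^ c - y ^ c) := by
  rcases le_total x y with hxy | hyx
  · exact mul_nonneg_of_nonpos_of_nonpos (sub_nonpos.mpr (rpow_le_rpow hx hxy hd))
      (sub_nonpos.mpr (rpow_le_rpow hx hxy hc))
  · exact mul_nonneg (sub_nonneg.mpr (rpow_le_rpow hy hyx hd))
      (sub_nonneg.mpr (rpow_le_rpow hy hyx hc))

theorem rpow_mul_rpow_add_le_of_nonneg {x y b c d : ℝ} (hx : 0 ≤ x) (hy : 0 ≤ y)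
    (hb : 0 ≤ b) (hc : 0 ≤ c) (hd : 0 ≤ d) :
    x ^ (b + d) * y ^ (b + c) + x ^ (b + c) * y ^ (b + d)
      ≤ x ^ b * y ^ (b + c + d) + x ^ (b + c + d) * y ^ b := by
  have hcd := add_nonneg hc hd
  rw [add_assoc, rpow_add_of_nonneg hx hb hd, rpow_add_of_nonneg hy hb hc,
    rpow_add_of_nonneg hx hb hc, rpow_add_of_nonneg hy hb hd, rpow_add_of_nonneg hy hb hcd,
    rpow_add_of_nonneg hx hb hcd, rpow_add_of_nonneg hx hc hd, rpow_add_of_nonneg hy hc hd]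
  have hfactor := mul_nonneg (mul_nonneg (rpow_nonneg hx b) (rpow_nonneg hy b))
    (rpow_sub_rpow_mul_rpow_sub_rpow_nonneg hx hy hc hd)
  linarith

end Real

/-- Polynomial inequality for moment products (real powers of nonnegative
bases, with the `rpow` conventions `0^c = 0` for `c ≠ 0` and `0^0 = 1`). -/
theorem polynomial_inequality_moment_products
    (p a b : ℝ) (hb : 0 ≤ b) (hba : b + 1 ≤ a) (hap : a ≤ (p + 1) / 2)
    (x y : ℝ) (hx : 0 ≤ x) (hy : 0 ≤ y) :
    x ^ a * y ^ (p - a) + x ^ (p - a) * y ^ a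
      ≤ x ^ b * y ^ (p - b) + x ^ (p - b) * y ^ b := by
  have key := Real.rpow_mul_rpow_add_le_of_nonneg hx hy hb
    (show 0 ≤ p - a - b by linarith) (show 0 ≤ a - b by linarith)
  have ha : b + (a - b) = a := by ring
  have hpa : b + (p - a - b) = p - a := by ring
  have hpb : b + (p - a - b) + (a - b) = p - b := by ring
  rwa [hpb, ha, hpa] at key
end
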